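/- For n ≥ k and any k×k permutation matrix P, every n×n strongly P-forcing matrix has at least (k−1) 0-entries in each row, hence M(n, P) ≤ n² − (k−1)n. -/

import Mathlib

open Finset

/-- Number of 1-entries of a (0,1)-matrix. -/
def onesCount {m n : ℕ} (A : Fin m → Fin n → Bool) : ℕ :=
  (Finset.univ.filter (fun p : Fin m × Fin n => A p.1 p.2 = true)).card

/-- Number of 0-entries of a (0,1)-matrix. -/
def zerosCount {m n : ℕ} (A : Fin m → Fin n → Bool) : ℕ :=
  (Finset.univ.filter (fun p : Fin m × Fin n => A p.1 p.2 = false)).card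

/-- `A` is `Q`-forcing: every s×t submatrix of `A` is entrywise ≥ Q. -/
def IsForcing {m n s t : ℕ} (A : Fin m → Fin n → Bool) (Q : Fin s → Fin t → Bool) : Prop :=
  ∀ (r : Fin s → Fin m) (c : Fin t → Fin n), StrictMono r → StrictMono c →
    ∀ y x, Q y x = true → A (r y) (c x) = true

/-- Minimum number of 1-entries of an m×n Q-forcing matrix. -/
noncomputable def mMin (m n : ℕ) {s t : ℕ} (Q : Fin s → Fin t → Bool) : ℕ :=
  sInf {v | ∃ A : Fin m → Fin n → Bool, IsForcing A Q ∧ onesCount A = v}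

/-- `A` is strongly `Q`-forcing: every 1-entry lies in a submatrix exactly equal to `Q`. -/
def IsStronglyForcing {m n s t : ℕ} (A : Fin m → Fin n → Bool)
    (Q : Fin s → Fin t → Bool) : Prop :=
  ∀ i j, A i j = true → ∃ (r : Fin s → Fin m) (c : Fin t → Fin n),
    StrictMono r ∧ StrictMono c ∧ (∀ y x, A (r y) (c x) = Q y x) ∧
    ∃ y x, r y = i ∧ c x = j

/-- Maximum number of 1-entries of an m×n strongly Q-forcing matrix. -/
noncomputable def MMax (m n : ℕ) {s t : ℕ} (Q : Fin s → Fin t → Bool) : ℕ :=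
  sSup {v | ∃ A : Fin m → Fin n → Bool, IsStronglyForcing A Q ∧ onesCount A = v}

/-- Corner sets of 0-positions with no 1-entry weakly in the given quadrant direction. -/
def cornerNW {s t : ℕ} (Q : Fin s → Fin t → Bool) : Finset (Fin s × Fin t) :=
  Finset.univ.filter (fun p => ∀ i' j', i' ≤ p.1 → j' ≤ p.2 → Q i' j' = false)

def cornerNE {s t : ℕ} (Q : Fin s → Fin t → Bool) : Finset (Fin s × Fin t) :=
  Finset.univ.filter (fun p => ∀ i' j', i' ≤ p.1 → p.2 ≤ j' → Q i' j' = false)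

def cornerSW {s t : ℕ} (Q : Fin s → Fin t → Bool) : Finset (Fin s × Fin t) :=
  Finset.univ.filter (fun p => ∀ i' j', p.1 ≤ i' → j' ≤ p.2 → Q i' j' = false)

def cornerSE {s t : ℕ} (Q : Fin s → Fin t → Bool) : Finset (Fin s × Fin t) :=
  Finset.univ.filter (fun p => ∀ i' j', p.1 ≤ i' → p.2 ≤ j' → Q i' j' = false)

/-- `P` is a permutation matrix. -/
def IsPermMatrix {k : ℕ} (P : Fin k → Fin k → Bool) : Prop :=
  ∃ σ : Equiv.Perm (Fin k), ∀ i j, P i j = decide (σ i = j)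

lemma card_filter_eq_false_of_isPermMatrix {k : ℕ} {P : Fin k → Fin k → Bool}
    (hP : IsPermMatrix P) (y : Fin k) : (univ.filter fun x => P y x = false).card = k - 1 := by
  obtain ⟨σ, hσ⟩ := hP
  have hrow : (univ.filter fun x => P y x = false) = univ.erase (σ y) := by
    ext x
    simp [hσ, eq_comm]
  rw [hrow, card_erase_of_mem (mem_univ _), card_univ, Fintype.card_fin]

/-- A 1-entry in row `i` sits in a copy of `Q`, whose row through it has at least `z` zeros in
distinct columns; a row without 1-entries has `n` zeros. -/
lemma IsStronglyForcing.card_row_false_ge {m n s t z : ℕ} {A : Fin m → Fin n → Bool}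
    {Q : Fin s → Fin t → Bool} (hA : IsStronglyForcing A Q)
    (hQ : ∀ y, z ≤ (univ.filter fun x => Q y x = false).card) (hz : z ≤ n) (i : Fin m) :
    z ≤ (univ.filter fun j => A i j = false).card := by
  by_cases hone : ∃ j, A i j = true
  · obtain ⟨j, hj⟩ := hone
    obtain ⟨r, c, -, hc, hcopy, y, -, rfl, -⟩ := hA i j hj
    refine (hQ y).trans (card_le_card_of_injOn c (fun x hx => ?_) hc.injective.injOn)
    simp only [coe_filter, Set.mem_ofPred_eq, mem_univ, true_and] at hx ⊢
    rw [hcopy, hx]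
  · push Not at hone
    rwa [filter_true_of_mem fun j _ => by simpa using hone j, card_univ, Fintype.card_fin]

lemma onesCount_add_zerosCount {m n : ℕ} (A : Fin m → Fin n → Bool) :
    onesCount A + zerosCount A = m * n := by
  have hsplit := card_filter_add_card_filter_not (s := (univ : Finset (Fin m × Fin n)))
    (fun p => A p.1 p.2 = true)
  simpa only [onesCount, zerosCount, Bool.not_eq_true, card_univ, Fintype.card_prod,
    Fintype.card_fin] using hsplit

lemma zerosCount_eq_sum_rows {m n : ℕ} (A : Fin m → Fin n → Bool) :
    zerosCount A = ∑ i, (univ.filter fun j => A i j = false).card := by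
  simp only [zerosCount, card_filter, Fintype.sum_prod_type]

lemma onesCount_le_of_card_row_false_ge {m n z : ℕ} (A : Fin m → Fin n → Bool)
    (hrow : ∀ i, z ≤ (univ.filter fun j => A i j = false).card) :
    onesCount A ≤ m * n - z * m := by
  have hzeros : z * m ≤ zerosCount A := by
    rw [zerosCount_eq_sum_rows]
    simpa [mul_comm] using sum_le_sum fun i (_ : i ∈ univ) => hrow i
  have hsum := onesCount_add_zerosCount A
  omega

theorem stmt19 (k n : ℕ) (hn : k ≤ n) (P : Fin k → Fin k → Bool) (hP : IsPermMatrix P) :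
    (∀ A : Fin n → Fin n → Bool, IsStronglyForcing A P →
      ∀ i : Fin n, k - 1 ≤ (Finset.univ.filter (fun j => A i j = false)).card) ∧
    MMax n n P ≤ n ^ 2 - (k - 1) * n := by
  have hrow : ∀ A : Fin n → Fin n → Bool, IsStronglyForcing A P →
      ∀ i : Fin n, k - 1 ≤ (univ.filter fun j => A i j = false).card := fun A hA =>
    hA.card_row_false_ge (fun y => (card_filter_eq_false_of_isPermMatrix hP y).ge) (by omega)
  refine ⟨hrow, csSup_le' ?_⟩
  rintro v ⟨A, hA, rfl⟩
  simpa [sq] using onesCount_le_of_card_row_false_ge A (hrow A hA)
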